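/- Let A be a clone over ℕ, and let A^A denote the set A with the twisted action a∗f := a[x_1, (f 1)⁺, (f 2)⁺, …], which is a right A-algebra. Then the following three sets are in bijection: (1) the set of homomorphisms of right A-algebras λ* : A → A^A (maps with λ*(a[f]) = (λ* a)[x_1, (f 1)⁺, (f 2)⁺, …]); (2) the set of homomorphisms of right A-algebras m : A × A → A (componentwise action on A × A); (3) the set F_2(A) of elements of A of rank 2. Explicitly, λ* ↦ λ*(x_1) is a bijection from set (1) onto set (3), and m ↦ (a ↦ m(a⁺, x_1)) is a bijection from set (2) onto set (1). -/
import Mathlib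

/-- A clone over the positive integers ℕ = {1,2,3,…}. -/
structure CloneN (A : Type*) where
  sub : A → (ℕ+ → A) → A
  x : ℕ+ → A
  sub_assoc : ∀ (a : A) (f g : ℕ+ → A), sub (sub a f) g = sub a (fun i => sub (f i) g)
  sub_x : ∀ a : A, sub a x = a
  x_sub : ∀ (i : ℕ+) (f : ℕ+ → A), sub (x i) f = f i

/-- `a` has rank `n`. -/
def CloneN.HasRank {A : Type*} (C : CloneN A) : ℕ → A → Prop
  | 0, a => C.sub a (fun _ => C.x 1) = a ∧ C.sub a (fun _ => C.x 2) = a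
  | n + 1, a => C.sub a (fun i => C.x (min i ⟨n + 1, Nat.succ_pos n⟩)) = a

/-- The twisted action on `A` making `A^A`:
`a∗f := a[x_1, (f 1)⁺, (f 2)⁺, …]` where `t⁺ = t[x_2,x_3,…]`. -/
def twistAct {A : Type*} (C : CloneN A) (a : A) (f : ℕ+ → A) : A :=
  C.sub a (fun j =>
    if j = 1 then C.x 1 else C.sub (f (j - 1)) (fun k => C.x (k + 1)))

namespace CloneAux

theorem succ_ne (k : ℕ+) : k + 1 ≠ 1 := (PNat.lt_add_left 1 k).ne'

theorem succ_sub (k : ℕ+) : k + 1 - 1 = k := PNat.add_sub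

theorem sub_succ (j : ℕ+) (h : j ≠ 1) : j - 1 + 1 = j :=
  PNat.sub_add_of_lt (lt_of_le_of_ne j.one_le (Ne.symm h))

theorem min_two (i : ℕ+) (h : i ≠ 1) : min i 2 = 2 :=
  min_eq_right (PNat.add_one_le_iff.mpr (lt_of_le_of_ne i.one_le (Ne.symm h)))

variable {A : Type*} (C : CloneN A)

/-- `a⁺ = a[x₂,x₃,…]`. -/
def pl (a : A) : A := C.sub a fun k => C.x (k + 1)

/-- The twisting of a substitution `f`: `(x₁, (f 1)⁺, (f 2)⁺, …)`. -/
def tw (f : ℕ+ → A) : ℕ+ → A := fun j =>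
  if j = 1 then C.x 1 else C.sub (f (j - 1)) fun k => C.x (k + 1)

theorem twistAct_eq (a : A) (f : ℕ+ → A) : twistAct C a f = C.sub a (tw C f) := rfl

theorem tw_one (f : ℕ+ → A) : tw C f 1 = C.x 1 := if_pos rfl

theorem tw_succ (f : ℕ+ → A) (k : ℕ+) : tw C f (k + 1) = pl C (f k) := by
  unfold tw pl
  rw [if_neg (succ_ne k), succ_sub]

/-- Substitution into `a⁺` drops the first coordinate. -/
theorem sub_pl (a : A) (h : ℕ+ → A) :
    C.sub (pl C a) h = C.sub a fun k => h (k + 1) := by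
  unfold pl
  rw [C.sub_assoc]
  exact congrArg _ (funext fun k => C.x_sub _ _)

/-- `(a[f])⁺ = a⁺[tw f]`. -/
theorem pl_sub (a : A) (f : ℕ+ → A) :
    pl C (C.sub a f) = C.sub (pl C a) (tw C f) := by
  rw [sub_pl]
  show C.sub (C.sub a f) _ = _
  rw [C.sub_assoc]
  exact congrArg _ (funext fun k => (tw_succ C f k).symm)

theorem pl_x (i : ℕ+) : pl C (C.x i) = C.x (i + 1) := C.x_sub _ _

theorem hasRank2_iff (a : A) :
    C.HasRank 2 a ↔ C.sub a (fun i => C.x (min i 2)) = a := Iff.rfl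

theorem rank_fun_eq :
    (fun i : ℕ+ => C.x (min i 2)) =
      fun i : ℕ+ => if i = 1 then C.x 1 else C.x 2 := by
  funext i
  by_cases hi : i = 1
  · subst hi; norm_num
  · rw [if_neg hi, min_two i hi]

/-- If `b` has rank 2, then `b[h]` only depends on `h 1` and `h 2`. -/
theorem rank2_ext {b : A} (hb : C.HasRank 2 b) {h h' : ℕ+ → A}
    (h1 : h 1 = h' 1) (h2 : h 2 = h' 2) : C.sub b h = C.sub b h' := by
  rw [hasRank2_iff] at hb
  have key : ∀ g : ℕ+ → A, C.sub b g = C.sub b fun i => if i = 1 then g 1 else g 2 := by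
    intro g
    conv_lhs => rw [← hb]
    rw [C.sub_assoc]
    refine congrArg _ (funext fun i => ?_)
    rw [C.x_sub]
    by_cases hi : i = 1
    · subst hi; norm_num
    · rw [if_neg hi, min_two i hi]
  rw [key h, key h', h1, h2]

/-- (3) → (1): the homomorphism associated to a rank-2 element. -/
def lmap (b : A) : A → A := fun a =>
  C.sub b fun j => if j = 1 then C.x 1 else pl C a

theorem lmap_hom (b : A) (a : A) (f : ℕ+ → A) :
    lmap C b (C.sub a f) = twistAct C (lmap C b a) f := by
  unfold lmap
  rw [twistAct_eq, C.sub_assoc]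
  refine congrArg _ (funext fun j => ?_)
  by_cases hj : j = 1
  · subst hj
    rw [if_pos rfl, if_pos rfl, C.x_sub, tw_one]
  · rw [if_neg hj, if_neg hj, ← pl_sub]

/-- (1) → (2): the binary operation associated to a homomorphism `A → A^A`. -/
def mmap (l : A → A) : A × A → A := fun p =>
  C.sub (l p.1) fun j => if j = 1 then p.2 else C.x (j - 1)

theorem mmap_hom (l : A → A)
    (hl : ∀ (a : A) (f : ℕ+ → A), l (C.sub a f) = twistAct C (l a) f)
    (p : A × A) (f : ℕ+ → A) :
    C.sub (mmap C l p) f = mmap C l (C.sub p.1 f, C.sub p.2 f) := by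
  obtain ⟨a, c⟩ := p
  unfold mmap
  simp only
  rw [C.sub_assoc, hl, twistAct_eq, C.sub_assoc]
  refine congrArg _ (funext fun j => ?_)
  by_cases hj : j = 1
  · subst hj
    rw [if_pos rfl, tw_one, C.x_sub, if_pos rfl]
  · rw [if_neg hj]
    unfold tw
    rw [if_neg hj, C.x_sub, C.sub_assoc]
    have : (fun k : ℕ+ => C.sub (C.x (k + 1))
        fun j' => if j' = 1 then C.sub c f else C.x (j' - 1)) = C.x := by
      funext k
      rw [C.x_sub, if_neg (succ_ne k), succ_sub]
    rw [this, C.sub_x]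

end CloneAux

open CloneAux in
/-- The following three sets are in bijection: (1) homomorphisms of right
`A`-algebras `λ* : A → A^A`; (2) homomorphisms of right `A`-algebras
`m : A × A → A`; (3) elements of `A` of rank `2`. Explicitly, `λ* ↦ λ*(x_1)` is a
bijection from (1) onto (3), and `m ↦ (a ↦ m(a⁺, x_1))` is a bijection from (2)
onto (1). -/
theorem hom_application_rank_two_bijections {A : Type*} (C : CloneN A) :
    ∃ (e1 : {l : A → A // ∀ (a : A) (f : ℕ+ → A),
              l (C.sub a f) = twistAct C (l a) f} ≃
            {a : A // C.HasRank 2 a})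
      (e2 : {m : A × A → A // ∀ (p : A × A) (f : ℕ+ → A),
              C.sub (m p) f = m (C.sub p.1 f, C.sub p.2 f)} ≃
            {l : A → A // ∀ (a : A) (f : ℕ+ → A),
              l (C.sub a f) = twistAct C (l a) f}),
      (∀ l, (e1 l : A) = l.1 (C.x 1)) ∧
      (∀ m, (e2 m).1 = fun a => m.1 (C.sub a (fun k => C.x (k + 1)), C.x 1)) := by
  -- rank-2 property of `l x₁` for a homomorphism `l`
  have rank_of_hom : ∀ l : A → A,
      (∀ (a : A) (f : ℕ+ → A), l (C.sub a f) = twistAct C (l a) f) →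
      C.HasRank 2 (l (C.x 1)) := by
    intro l hl
    rw [hasRank2_iff]
    have h1 : C.x 1 = C.sub (C.x 1) (fun _ => C.x 1) := by rw [C.x_sub 1 (fun _ => C.x 1)]
    conv_rhs => rw [h1, hl, twistAct_eq]
    refine congrArg _ (funext fun i => ?_)
    by_cases hi : i = 1
    · subst hi
      have : min (1:ℕ+) 2 = 1 := by decide
      rw [this, tw_one]
    · rw [min_two i hi]
      unfold tw
      rw [if_neg hi, C.x_sub]
      have : i - 1 + 1 = i := sub_succ i hi
      rfl
  refine ⟨⟨fun l => ⟨l.1 (C.x 1), rank_of_hom l.1 l.2⟩,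
           fun b => ⟨lmap C b.1, lmap_hom C b.1⟩, ?_, ?_⟩,
          ⟨fun m => ⟨fun a => m.1 (pl C a, C.x 1), ?_⟩,
           fun l => ⟨mmap C l.1, mmap_hom C l.1 l.2⟩, ?_, ?_⟩,
          fun l => rfl, fun m => rfl⟩
  · -- left inverse for e1 : lmap C (l x₁) = l
    rintro ⟨l, hl⟩
    ext a
    show lmap C (l (C.x 1)) a = l a
    have hb := rank_of_hom l hl
    have ha : a = C.sub (C.x 1) (fun j => if j = 1 then a else C.x (j - 1)) :=
      ((C.x_sub 1 _).trans (if_pos rfl)).symm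
    conv_rhs => rw [ha, hl, twistAct_eq]
    unfold lmap
    refine rank2_ext C hb ?_ ?_
    · rw [if_pos rfl, tw_one]
    · have h2 : (2 : ℕ+) ≠ 1 := by decide
      have e : (2 : ℕ+) - 1 = 1 := by decide
      show (if (2:ℕ+) = 1 then C.x 1 else pl C a) = tw C _ 2
      unfold tw
      simp only [if_neg h2, e, if_pos rfl]
      rfl
  · -- right inverse for e1 : lmap C b (x₁) = b
    rintro ⟨b, hb⟩
    ext
    show lmap C b (C.x 1) = b
    unfold lmap
    rw [hasRank2_iff] at hb
    conv_rhs => rw [← hb]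
    refine congrArg _ (funext fun j => ?_)
    by_cases hj : j = 1
    · subst hj
      have : min (1:ℕ+) 2 = 1 := by decide
      rw [if_pos rfl, this]
    · rw [if_neg hj, pl_x, min_two j hj]
      rfl
  · -- e2.toFun lands in homomorphisms
    intro a f
    have hm := m.2
    show m.1 (pl C (C.sub a f), C.x 1) = twistAct C (m.1 (pl C a, C.x 1)) f
    rw [twistAct_eq, hm, pl_sub]
    have : C.sub (C.x 1) (tw C f) = C.x 1 := by rw [C.x_sub, tw_one]
    rw [this]
  · -- left inverse for e2
    rintro ⟨m, hm⟩
    apply Subtype.ext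
    funext p
    obtain ⟨a, c⟩ := p
    show mmap C (fun a => m (pl C a, C.x 1)) (a, c) = m (a, c)
    unfold mmap
    simp only
    rw [hm]
    have hx : (fun k : ℕ+ => if k + 1 = 1 then c else C.x (k + 1 - 1)) = C.x := by
      funext k
      rw [if_neg (succ_ne k), succ_sub]
    simp only [C.x_sub, sub_pl, if_pos rfl, if_true]
    rw [hx, C.sub_x]
  · -- right inverse for e2
    rintro ⟨l, hl⟩
    apply Subtype.ext
    funext a
    show mmap C l (pl C a, C.x 1) = l a
    unfold mmap pl
    simp only
    rw [hl, twistAct_eq, C.sub_assoc]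
    conv_rhs => rw [← C.sub_x (l a)]
    refine congrArg _ (funext fun j => ?_)
    by_cases hj : j = 1
    · subst hj
      rw [tw_one, C.x_sub, if_pos rfl]
    · unfold tw
      rw [if_neg hj, C.x_sub, C.x_sub, if_neg (succ_ne _), succ_sub, sub_succ j hj]
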